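/- arXiv:1710.05797 — 6 statements merged into one kernel-verified Lean document; each statement's English description precedes it below -/
import Mathlib

section
/- The shape function N1 satisfies the Kronecker delta property: N1(P1) = 1, N1(P2) = 0, N1(P3) = 0, and both partial derivatives ∂N1/∂x and ∂N1/∂y vanish at each of the three nodes P1, P2, P3. -/
/-!
In area coordinates `N1 = φ(L1, L2, L3)` with `φ(u, v, w) = u + u²v + u²w - uv² - uw²`, and the
nodes `P1, P2, P3` are exactly where `(L1, L2, L3)` is the vertex `(1,0,0)`, `(0,1,0)`, `(0,0,1)`
of the standard simplex. There `φ` takes the values `1, 0, 0`. The gradient of `φ` vanishes at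
`(0,1,0)` and `(0,0,1)`, and equals `(1,1,1)` at `(1,0,0)`, where the chain rule therefore gives
the derivative of `L1 + L2 + L3`, which is identically `1`.
-/

noncomputable section

/-- Area coordinate `L1(x,y) = 1 - x/a - y/b`. -/
def L1 (a b : ℝ) (x y : ℝ) : ℝ := 1 - x / a - y / b

/-- Area coordinate `L2(x,y) = x/a - (1/h - 1/b)·y`. -/
def L2 (a h b : ℝ) (x y : ℝ) : ℝ := x / a - (1 / h - 1 / b) * y

/-- Area coordinate `L3(x,y) = y/h`. -/
def L3 (h : ℝ) (x y : ℝ) : ℝ := y / h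

/-- Deflection shape function `N1 = L1 + L1²L2 + L1²L3 - L1L2² - L1L3²`. -/
def N1 (a h b : ℝ) (x y : ℝ) : ℝ :=
  L1 a b x y + (L1 a b x y) ^ 2 * L2 a h b x y + (L1 a b x y) ^ 2 * L3 h x y
    - L1 a b x y * (L2 a h b x y) ^ 2 - L1 a b x y * (L3 h x y) ^ 2

/-- Partial derivative in the first variable. -/
def pdx (f : ℝ → ℝ → ℝ) (x y : ℝ) : ℝ := deriv (fun t => f t y) x

/-- Partial derivative in the second variable. -/
def pdy (f : ℝ → ℝ → ℝ) (x y : ℝ) : ℝ := deriv (fun t => f x t) y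

def n1Cubic (u v w : ℝ) : ℝ := u + u ^ 2 * v + u ^ 2 * w - u * v ^ 2 - u * w ^ 2

def triangleVertices : Set (ℝ × ℝ × ℝ) := {(1, 0, 0), (0, 1, 0), (0, 0, 1)}

lemma N1_eq_n1Cubic (a h b x y : ℝ) :
    N1 a h b x y = n1Cubic (L1 a b x y) (L2 a h b x y) (L3 h x y) := rfl

lemma L1_add_L2_add_L3 (a h b x y : ℝ) : L1 a b x y + L2 a h b x y + L3 h x y = 1 := by
  unfold L1 L2 L3
  ring

lemma hasDerivAt_n1Cubic_comp {f g k : ℝ → ℝ} {f' g' k' t : ℝ} (hf : HasDerivAt f f' t)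
    (hg : HasDerivAt g g' t) (hk : HasDerivAt k k' t) :
    HasDerivAt (fun s => n1Cubic (f s) (g s) (k s))
      ((1 + 2 * f t * g t + 2 * f t * k t - g t ^ 2 - k t ^ 2) * f'
        + (f t ^ 2 - 2 * f t * g t) * g' + (f t ^ 2 - 2 * f t * k t) * k') t := by
  have := (((hf.add ((hf.pow 2).mul hg)).add ((hf.pow 2).mul hk)).sub
    (hf.mul (hg.pow 2))).sub (hf.mul (hk.pow 2))
  refine this.congr_deriv ?_
  simp only [Pi.pow_apply]
  norm_num
  ring

lemma deriv_n1Cubic_comp_eq_zero {f g k : ℝ → ℝ} {t : ℝ} (hf : DifferentiableAt ℝ f t)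
    (hg : DifferentiableAt ℝ g t) (hk : DifferentiableAt ℝ k t)
    (hsum : ∀ s, f s + g s + k s = 1) (hvert : (f t, g t, k t) ∈ triangleVertices) :
    deriv (fun s => n1Cubic (f s) (g s) (k s)) t = 0 := by
  rw [(hasDerivAt_n1Cubic_comp hf.hasDerivAt hg.hasDerivAt hk.hasDerivAt).deriv]
  have hderiv_sum : deriv f t + deriv g t + deriv k t = 0 := by
    have hsum' : HasDerivAt (fun s => f s + g s + k s) (deriv f t + deriv g t + deriv k t) t :=
      (hf.hasDerivAt.add hg.hasDerivAt).add hk.hasDerivAt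
    rw [funext hsum] at hsum'
    exact hsum'.unique (hasDerivAt_const t 1)
  simp only [triangleVertices, Set.mem_insert_iff, Set.mem_singleton_iff, Prod.mk.injEq] at hvert
  rcases hvert with ⟨hft, hgt, hkt⟩ | ⟨hft, hgt, hkt⟩ | ⟨hft, hgt, hkt⟩ <;> rw [hft, hgt, hkt]
  · linear_combination hderiv_sum
  · ring
  · ring

lemma pdx_N1_eq_zero {a h b x y : ℝ}
    (hv : (L1 a b x y, L2 a h b x y, L3 h x y) ∈ triangleVertices) : pdx (N1 a h b) x y = 0 :=
  deriv_n1Cubic_comp_eq_zero (by unfold L1; fun_prop) (by unfold L2; fun_prop)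
    (by unfold L3; fun_prop) (fun s => L1_add_L2_add_L3 a h b s y) hv

lemma pdy_N1_eq_zero {a h b x y : ℝ}
    (hv : (L1 a b x y, L2 a h b x y, L3 h x y) ∈ triangleVertices) : pdy (N1 a h b) x y = 0 :=
  deriv_n1Cubic_comp_eq_zero (by unfold L1; fun_prop) (by unfold L2; fun_prop)
    (by unfold L3; fun_prop) (fun s => L1_add_L2_add_L3 a h b x s) hv

lemma areaCoords_P1 (a h b : ℝ) : L1 a b 0 0 = 1 ∧ L2 a h b 0 0 = 0 ∧ L3 h 0 0 = 0 := by
  simp [L1, L2, L3]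

lemma areaCoords_P2 {a : ℝ} (h b : ℝ) (ha : a ≠ 0) :
    L1 a b a 0 = 0 ∧ L2 a h b a 0 = 1 ∧ L3 h a 0 = 0 := by
  simp [L1, L2, L3, ha]

lemma areaCoords_P3 {a h : ℝ} (b : ℝ) (ha : a ≠ 0) (hh : h ≠ 0) :
    L1 a b (a * (1 - h / b)) h = 0 ∧ L2 a h b (a * (1 - h / b)) h = 0 ∧
      L3 h (a * (1 - h / b)) h = 1 := by
  have hL1 : L1 a b (a * (1 - h / b)) h = 0 := by
    rw [L1, mul_div_cancel_left₀ _ ha]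
    ring
  have hL3 : L3 h (a * (1 - h / b)) h = 1 := div_self hh
  refine ⟨hL1, ?_, hL3⟩
  linear_combination L1_add_L2_add_L3 a h b (a * (1 - h / b)) h - hL1 - hL3

theorem N1_kronecker_delta_general (a h b : ℝ) (ha : 0 < a) (hh : 0 < h) :
    N1 a h b 0 0 = 1 ∧ N1 a h b a 0 = 0 ∧ N1 a h b (a * (1 - h / b)) h = 0 ∧
    pdx (N1 a h b) 0 0 = 0 ∧ pdx (N1 a h b) a 0 = 0 ∧
      pdx (N1 a h b) (a * (1 - h / b)) h = 0 ∧
    pdy (N1 a h b) 0 0 = 0 ∧ pdy (N1 a h b) a 0 = 0 ∧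
      pdy (N1 a h b) (a * (1 - h / b)) h = 0 := by
  obtain ⟨h11, h12, h13⟩ := areaCoords_P1 a h b
  obtain ⟨h21, h22, h23⟩ := areaCoords_P2 h b ha.ne'
  obtain ⟨h31, h32, h33⟩ := areaCoords_P3 b ha.ne' hh.ne'
  have hv1 : (L1 a b 0 0, L2 a h b 0 0, L3 h 0 0) ∈ triangleVertices := by
    simp [triangleVertices, h11, h12, h13]
  have hv2 : (L1 a b a 0, L2 a h b a 0, L3 h a 0) ∈ triangleVertices := by
    simp [triangleVertices, h21, h22, h23]
  have hv3 : (L1 a b (a * (1 - h / b)) h, L2 a h b (a * (1 - h / b)) h,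
      L3 h (a * (1 - h / b)) h) ∈ triangleVertices := by
    simp [triangleVertices, h31, h32, h33]
  refine ⟨?_, ?_, ?_, pdx_N1_eq_zero hv1, pdx_N1_eq_zero hv2, pdx_N1_eq_zero hv3,
    pdy_N1_eq_zero hv1, pdy_N1_eq_zero hv2, pdy_N1_eq_zero hv3⟩ <;>
    simp [N1_eq_n1Cubic, n1Cubic, h11, h12, h13, h21, h31]

/-- Kronecker delta property of the deflection shape function `N1` at the nodes
`P1 = (0,0)`, `P2 = (a,0)`, `P3 = (a(1-h/b), h)`. -/
theorem N1_kronecker_delta (a h b : ℝ) (ha : 0 < a) (hh : 0 < h) (hb : h ≤ b) :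
    N1 a h b 0 0 = 1 ∧ N1 a h b a 0 = 0 ∧ N1 a h b (a * (1 - h / b)) h = 0 ∧
    pdx (N1 a h b) 0 0 = 0 ∧ pdx (N1 a h b) a 0 = 0 ∧
      pdx (N1 a h b) (a * (1 - h / b)) h = 0 ∧
    pdy (N1 a h b) 0 0 = 0 ∧ pdy (N1 a h b) a 0 = 0 ∧
      pdy (N1 a h b) (a * (1 - h / b)) h = 0 :=
  N1_kronecker_delta_general a h b ha hh
end
end

section
/- The rotational shape function Nx1 satisfies the Kronecker delta property: Nx1(Pj) = 0 for j = 1,2,3; ∂Nx1/∂x(Pj) = 0 for j = 1,2,3; ∂Nx1/∂y(P1) = 1; and ∂Nx1/∂y(P2) = ∂Nx1/∂y(P3) = 0. -/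
noncomputable section

/-- Rotational shape function `Nx1 = h·(L1²L3 + ½L1L2L3)`. -/
def Nx1 (a h b : ℝ) (x y : ℝ) : ℝ :=
  h * ((L1 a b x y) ^ 2 * L3 h x y + (1 / 2) * L1 a b x y * L2 a h b x y * L3 h x y)

/-!
The shape function is the cubic `h·(l₁²l₃ + ½l₁l₂l₃)` in the area coordinates, and the area
coordinates take the values `δᵢⱼ` at the nodes. Every monomial of the cubic contains `l₁` and
`l₃`, so it vanishes at all nodes. Its gradient vanishes at `P2` and `P3`, where two of the
coordinates vanish and every monomial has degree at least two in them; at `P1`, where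
`(l₁, l₂, l₃) = (1, 0, 0)`, only the monomial `l₁²l₃` contributes, and the gradient is
`h·∇L3 = (0, 1)`.
-/

def nx1Form (h l₁ l₂ l₃ : ℝ) : ℝ := h * (l₁ ^ 2 * l₃ + (1 / 2) * l₁ * l₂ * l₃)

lemma hasDerivAt_nx1Form (h : ℝ) {u v w : ℝ → ℝ} {u' v' w' t : ℝ}
    (hu : HasDerivAt u u' t) (hv : HasDerivAt v v' t) (hw : HasDerivAt w w' t) :
    HasDerivAt (fun s => nx1Form h (u s) (v s) (w s))
      (h * (2 * u t * u' * w t + u t ^ 2 * w'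
        + (1 / 2) * (u' * v t * w t + u t * v' * w t + u t * v t * w'))) t := by
  have key : HasDerivAt (fun s => h * (u s * u s * w s + 1 / 2 * (u s * v s * w s)))
      (h * ((u' * u t + u t * u') * w t + u t * u t * w'
        + 1 / 2 * ((u' * v t + u t * v') * w t + u t * v t * w'))) t :=
    (((hu.mul hu).mul hw).add (((hu.mul hv).mul hw).const_mul (1 / 2))).const_mul h
  convert key using 1
  · ext s
    simp only [nx1Form]
    ring
  · ring

section AreaCoordinates

variable (a h b x y : ℝ)

lemma Nx1_eq_nx1Form : Nx1 a h b x y = nx1Form h (L1 a b x y) (L2 a h b x y) (L3 h x y) := rfl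

lemma hasDerivAt_L1_fst : HasDerivAt (fun t => L1 a b t y) (-(1 / a)) x := by
  unfold L1; simpa using (((hasDerivAt_id x).div_const a).const_sub 1).sub_const (y / b)

lemma hasDerivAt_L1_snd : HasDerivAt (fun t => L1 a b x t) (-(1 / b)) y := by
  unfold L1; simpa using ((hasDerivAt_id y).div_const b).const_sub (1 - x / a)

lemma hasDerivAt_L2_fst : HasDerivAt (fun t => L2 a h b t y) (1 / a) x := by
  unfold L2; simpa using ((hasDerivAt_id x).div_const a).sub_const ((1 / h - 1 / b) * y)

lemma hasDerivAt_L2_snd : HasDerivAt (fun t => L2 a h b x t) (-(1 / h - 1 / b)) y := by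
  unfold L2; simpa using ((hasDerivAt_id y).const_mul (1 / h - 1 / b)).const_sub (x / a)

lemma hasDerivAt_L3_fst : HasDerivAt (fun t => L3 h t y) 0 x :=
  hasDerivAt_const x (y / h)

lemma hasDerivAt_L3_snd : HasDerivAt (fun t => L3 h x t) (1 / h) y :=
  (hasDerivAt_id y).div_const h

lemma pdx_Nx1 : pdx (Nx1 a h b) x y =
    h * (2 * L1 a b x y * (-(1 / a)) * L3 h x y + L1 a b x y ^ 2 * 0
      + (1 / 2) * (-(1 / a) * L2 a h b x y * L3 h x y + L1 a b x y * (1 / a) * L3 h x y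
        + L1 a b x y * L2 a h b x y * 0)) :=
  (hasDerivAt_nx1Form h (hasDerivAt_L1_fst a b x y) (hasDerivAt_L2_fst a h b x y)
    (hasDerivAt_L3_fst h x y)).deriv

lemma pdy_Nx1 : pdy (Nx1 a h b) x y =
    h * (2 * L1 a b x y * (-(1 / b)) * L3 h x y + L1 a b x y ^ 2 * (1 / h)
      + (1 / 2) * (-(1 / b) * L2 a h b x y * L3 h x y
        + L1 a b x y * (-(1 / h - 1 / b)) * L3 h x y + L1 a b x y * L2 a h b x y * (1 / h))) :=
  (hasDerivAt_nx1Form h (hasDerivAt_L1_snd a b x y) (hasDerivAt_L2_snd a h b x y)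
    (hasDerivAt_L3_snd h x y)).deriv

lemma area_coords_P1 : L1 a b 0 0 = 1 ∧ L2 a h b 0 0 = 0 ∧ L3 h 0 0 = 0 := by
  simp [L1, L2, L3]

lemma area_coords_P2 (ha : a ≠ 0) : L1 a b a 0 = 0 ∧ L2 a h b a 0 = 1 ∧ L3 h a 0 = 0 := by
  simp [L1, L2, L3, ha]

lemma area_coords_P3 (ha : a ≠ 0) (hh : h ≠ 0) :
    L1 a b (a * (1 - h / b)) h = 0 ∧ L2 a h b (a * (1 - h / b)) h = 0 ∧
      L3 h (a * (1 - h / b)) h = 1 := by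
  refine ⟨?_, ?_, div_self hh⟩
  · unfold L1; field_simp; ring
  · unfold L2; field_simp; ring

end AreaCoordinates

theorem Nx1_kronecker_delta_general (a h b : ℝ) (ha : 0 < a) (hh : 0 < h) :
    (Nx1 a h b 0 0 = 0 ∧ Nx1 a h b a 0 = 0 ∧ Nx1 a h b (a * (1 - h / b)) h = 0) ∧
    (pdx (Nx1 a h b) 0 0 = 0 ∧ pdx (Nx1 a h b) a 0 = 0 ∧
      pdx (Nx1 a h b) (a * (1 - h / b)) h = 0) ∧
    pdy (Nx1 a h b) 0 0 = 1 ∧ pdy (Nx1 a h b) a 0 = 0 ∧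
      pdy (Nx1 a h b) (a * (1 - h / b)) h = 0 := by
  obtain ⟨hP1₁, hP1₂, hP1₃⟩ := area_coords_P1 a h b
  obtain ⟨hP2₁, hP2₂, hP2₃⟩ := area_coords_P2 a h b ha.ne'
  obtain ⟨hP3₁, hP3₂, hP3₃⟩ := area_coords_P3 a h b ha.ne' hh.ne'
  simp only [Nx1_eq_nx1Form, nx1Form, pdx_Nx1, pdy_Nx1, hP1₁, hP1₂, hP1₃, hP2₁, hP2₂, hP2₃,
    hP3₁, hP3₂, hP3₃]
  norm_num [hh.ne']

/-- Kronecker delta property of the rotational shape function `Nx1` at the nodes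
`P1 = (0,0)`, `P2 = (a,0)`, `P3 = (a(1-h/b), h)`. -/
theorem Nx1_kronecker_delta (a h b : ℝ) (ha : 0 < a) (hh : 0 < h) (hb : h ≤ b) :
    (Nx1 a h b 0 0 = 0 ∧ Nx1 a h b a 0 = 0 ∧ Nx1 a h b (a * (1 - h / b)) h = 0) ∧
    (pdx (Nx1 a h b) 0 0 = 0 ∧ pdx (Nx1 a h b) a 0 = 0 ∧
      pdx (Nx1 a h b) (a * (1 - h / b)) h = 0) ∧
    pdy (Nx1 a h b) 0 0 = 1 ∧ pdy (Nx1 a h b) a 0 = 0 ∧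
      pdy (Nx1 a h b) (a * (1 - h / b)) h = 0 :=
  Nx1_kronecker_delta_general a h b ha hh
end
end

section
/- The element interpolation is exact at the nodes: for any real numbers w1, w2, w3, θx1, θx2, θx3, θy1, θy2, θy3, the function w(x,y) = Σᵢ₌₁³ Nᵢ(x,y)·wᵢ + Σᵢ₌₁³ Nxᵢ(x,y)·θxᵢ + Σᵢ₌₁³ Nyᵢ(x,y)·θyᵢ satisfies, for each i = 1,2,3: w(Pᵢ) = wᵢ, ∂w/∂y(Pᵢ) = θxᵢ, and ∂w/∂x(Pᵢ) = -θyᵢ. -/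
/-!
In area coordinates `λ = (L1, L2, L3)` the interpolant is the cubic
`∑ wᵢ λᵢ + ∑ qᵢⱼ λᵢ² λⱼ + r λ₁ λ₂ λ₃` with `qᵢⱼ = wᵢ - wⱼ + (Pⱼ - Pᵢ) · gᵢ`, where
`gᵢ = (-θyᵢ, θxᵢ)` is the gradient prescribed at `Pᵢ`. At the node `Pₖ` the area coordinates
are the unit vector `eₖ`, so the value there is `wₖ` and the derivative along a direction `v` is
`∑ᵢ wᵢ dᵢ + ∑ⱼ qₖⱼ dⱼ`, `d` being the derivative of `λ` along `v`. Because area coordinates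
sum to `1` and reproduce the Cartesian coordinates (`∑ dⱼ = 0`, `∑ dⱼ Pⱼ = v`), this collapses
to `gₖ · v`.
-/

noncomputable section

/-- Deflection shape function `N2 = L2 + L2²L3 + L2²L1 - L2L3² - L2L1²`. -/
def N2 (a h b : ℝ) (x y : ℝ) : ℝ :=
  L2 a h b x y + (L2 a h b x y) ^ 2 * L3 h x y + (L2 a h b x y) ^ 2 * L1 a b x y
    - L2 a h b x y * (L3 h x y) ^ 2 - L2 a h b x y * (L1 a b x y) ^ 2

/-- Deflection shape function `N3 = L3 + L3²L1 + L3²L2 - L3L1² - L3L2²`. -/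
def N3 (a h b : ℝ) (x y : ℝ) : ℝ :=
  L3 h x y + (L3 h x y) ^ 2 * L1 a b x y + (L3 h x y) ^ 2 * L2 a h b x y
    - L3 h x y * (L1 a b x y) ^ 2 - L3 h x y * (L2 a h b x y) ^ 2

/-- Rotational shape function
`Ny1 = -a·(L1²L2 + ½L1L2L3) - a·(1 - h/b)·(L1²L3 + ½L1L2L3)`. -/
def Ny1 (a h b : ℝ) (x y : ℝ) : ℝ :=
  -a * ((L1 a b x y) ^ 2 * L2 a h b x y + (1 / 2) * L1 a b x y * L2 a h b x y * L3 h x y)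
    - a * (1 - h / b) *
      ((L1 a b x y) ^ 2 * L3 h x y + (1 / 2) * L1 a b x y * L2 a h b x y * L3 h x y)

/-- Rotational shape function `Nx2 = h·(L2²L3 + ½L1L2L3)`. -/
def Nx2 (a h b : ℝ) (x y : ℝ) : ℝ :=
  h * ((L2 a h b x y) ^ 2 * L3 h x y + (1 / 2) * L1 a b x y * L2 a h b x y * L3 h x y)

/-- Rotational shape function `Nx3 = -h·(L3²L1 + L2L3² + L1L2L3)`. -/
def Nx3 (a h b : ℝ) (x y : ℝ) : ℝ :=
  -h * ((L3 h x y) ^ 2 * L1 a b x y + L2 a h b x y * (L3 h x y) ^ 2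
    + L1 a b x y * L2 a h b x y * L3 h x y)

/-- Rotational shape function
`Ny2 = (a·h/b)·(L2²L3 + ½L1L2L3) + a·(L1L2² + ½L1L2L3)`. -/
def Ny2 (a h b : ℝ) (x y : ℝ) : ℝ :=
  (a * h / b) * ((L2 a h b x y) ^ 2 * L3 h x y
      + (1 / 2) * L1 a b x y * L2 a h b x y * L3 h x y)
    + a * (L1 a b x y * (L2 a h b x y) ^ 2
      + (1 / 2) * L1 a b x y * L2 a h b x y * L3 h x y)

/-- Rotational shape function
`Ny3 = a·(1 - h/b)·(L3²L1 + ½L1L2L3) - (a·h/b)·(L2L3² + ½L1L2L3)`. -/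
def Ny3 (a h b : ℝ) (x y : ℝ) : ℝ :=
  a * (1 - h / b) * ((L3 h x y) ^ 2 * L1 a b x y
      + (1 / 2) * L1 a b x y * L2 a h b x y * L3 h x y)
    - (a * h / b) * (L2 a h b x y * (L3 h x y) ^ 2
      + (1 / 2) * L1 a b x y * L2 a h b x y * L3 h x y)

def areaCubic (c : Fin 3 → ℝ) (q : Matrix (Fin 3) (Fin 3) ℝ) (r : ℝ) (l : Fin 3 → ℝ) : ℝ :=
  ∑ i, c i * l i + ∑ i, ∑ j, q i j * (l i ^ 2 * l j) + r * (l 0 * l 1 * l 2)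

theorem areaCubic_single (c : Fin 3 → ℝ) (q : Matrix (Fin 3) (Fin 3) ℝ) (r : ℝ) (k : Fin 3) :
    areaCubic c q r (Pi.single k 1) = c k + q k k := by
  fin_cases k <;>
    simp only [areaCubic, Fin.sum_univ_three, Fin.zero_eta, Fin.mk_one, Fin.reduceFinMk,
      Pi.single_eq_same, Pi.single_eq_of_ne, ne_eq, Fin.reduceEq, not_false_eq_true] <;>
    ring

theorem HasDerivAt.areaCubic_of_eq_single {c : Fin 3 → ℝ} {q : Matrix (Fin 3) (Fin 3) ℝ} {r : ℝ}
    {l : ℝ → Fin 3 → ℝ} {d : Fin 3 → ℝ} {t : ℝ} {k : Fin 3}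
    (hl : HasDerivAt l d t) (hlt : l t = Pi.single k 1) :
    HasDerivAt (fun s => areaCubic c q r (l s))
      (∑ i, c i * d i + ∑ j, q k j * d j + 2 * q k k * d k) t := by
  replace hl := hasDerivAt_pi.1 hl
  have H := ((HasDerivAt.fun_sum (u := Finset.univ) fun i _ => (hl i).const_mul (c i)).fun_add
    (HasDerivAt.fun_sum (u := Finset.univ) fun i _ => HasDerivAt.fun_sum (u := Finset.univ)
      fun j _ => (((hl i).fun_pow 2).fun_mul (hl j)).const_mul (q i j))).fun_add
    ((((hl 0).fun_mul (hl 1)).fun_mul (hl 2)).const_mul r)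
  refine H.congr_deriv ?_
  rw [hlt]
  fin_cases k <;>
    simp only [Fin.sum_univ_three, Fin.zero_eta, Fin.mk_one, Fin.reduceFinMk, Pi.single_eq_same,
      Pi.single_eq_of_ne, ne_eq, Fin.reduceEq, not_false_eq_true, Nat.cast_ofNat] <;>
    ring

def hermiteCoeff (w gx gy X Y : Fin 3 → ℝ) : Matrix (Fin 3) (Fin 3) ℝ :=
  Matrix.of fun i j => w i - w j + (X j - X i) * gx i + (Y j - Y i) * gy i

theorem hermiteCoeff_self (w gx gy X Y : Fin 3 → ℝ) (k : Fin 3) :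
    hermiteCoeff w gx gy X Y k k = 0 := by
  simp [hermiteCoeff]

theorem HasDerivAt.areaCubic_hermiteCoeff_of_eq_single {w gx gy X Y : Fin 3 → ℝ} {r : ℝ}
    {l : ℝ → Fin 3 → ℝ} {d : Fin 3 → ℝ} {t v₁ v₂ : ℝ} {k : Fin 3}
    (hl : HasDerivAt l d t) (hlt : l t = Pi.single k 1)
    (hd : ∑ j, d j = 0) (hdX : ∑ j, X j * d j = v₁) (hdY : ∑ j, Y j * d j = v₂) :
    HasDerivAt (fun s => areaCubic w (hermiteCoeff w gx gy X Y) r (l s))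
      (v₁ * gx k + v₂ * gy k) t := by
  refine (hl.areaCubic_of_eq_single hlt).congr_deriv ?_
  simp only [Fin.sum_univ_three, hermiteCoeff, Matrix.of_apply] at hd hdX hdY ⊢
  linear_combination (w k - X k * gx k - Y k * gy k) * hd + gx k * hdX + gy k * hdY

def areaCoords (a h b x y : ℝ) : Fin 3 → ℝ := ![L1 a b x y, L2 a h b x y, L3 h x y]

def areaCoordsDerivX (a : ℝ) : Fin 3 → ℝ := ![-1 / a, 1 / a, 0]

def areaCoordsDerivY (h b : ℝ) : Fin 3 → ℝ := ![-1 / b, -(1 / h - 1 / b), 1 / h]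

def nodeX (a h b : ℝ) : Fin 3 → ℝ := ![0, a, a * (1 - h / b)]

def nodeY (h : ℝ) : Fin 3 → ℝ := ![0, 0, h]

section Element

variable {a h b : ℝ}

theorem areaCoords_eq_add (x y : ℝ) : areaCoords a h b x y =
    areaCoords a h b 0 0 + x • areaCoordsDerivX a + y • areaCoordsDerivY h b := by
  ext i
  fin_cases i <;>
    simp only [areaCoords, areaCoordsDerivX, areaCoordsDerivY, L1, L2, L3, Pi.add_apply,
      Pi.smul_apply, smul_eq_mul, Fin.zero_eta, Fin.mk_one, Fin.reduceFinMk, Matrix.cons_val_zero,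
      Matrix.cons_val_one, Matrix.cons_val] <;>
    ring

theorem hasDerivAt_areaCoords_left (y t : ℝ) :
    HasDerivAt (fun x => areaCoords a h b x y) (areaCoordsDerivX a) t := by
  simp_rw [areaCoords_eq_add _ y]
  simpa using (((hasDerivAt_id t).smul_const (areaCoordsDerivX a)).const_add
    (areaCoords a h b 0 0)).add_const (y • areaCoordsDerivY h b)

theorem hasDerivAt_areaCoords_right (x t : ℝ) :
    HasDerivAt (fun y => areaCoords a h b x y) (areaCoordsDerivY h b) t := by
  simp_rw [areaCoords_eq_add x]
  simpa using ((hasDerivAt_id t).smul_const (areaCoordsDerivY h b)).const_add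
    (areaCoords a h b 0 0 + x • areaCoordsDerivX a)

theorem areaCoords_node (ha : a ≠ 0) (hh : h ≠ 0) (k : Fin 3) :
    areaCoords a h b (nodeX a h b k) (nodeY h k) = Pi.single k 1 := by
  ext i
  fin_cases k <;> fin_cases i <;>
    simp only [areaCoords, nodeX, nodeY, L1, L2, L3, Fin.zero_eta, Fin.mk_one, Fin.reduceFinMk,
      Matrix.cons_val_zero, Matrix.cons_val_one, Matrix.cons_val, Pi.single_eq_same,
      Pi.single_eq_of_ne, ne_eq, Fin.reduceEq, not_false_eq_true] <;>
    field_simp <;> ring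

theorem areaCoordsDerivX_moments (ha : a ≠ 0) :
    ∑ j, areaCoordsDerivX a j = 0 ∧ ∑ j, nodeX a h b j * areaCoordsDerivX a j = 1 ∧
      ∑ j, nodeY h j * areaCoordsDerivX a j = 0 := by
  simp only [Fin.sum_univ_three, areaCoordsDerivX, nodeX, nodeY, Matrix.cons_val_zero,
    Matrix.cons_val_one, Matrix.cons_val]
  exact ⟨by ring, by field_simp; ring, by ring⟩

theorem areaCoordsDerivY_moments (hh : h ≠ 0) :
    ∑ j, areaCoordsDerivY h b j = 0 ∧ ∑ j, nodeX a h b j * areaCoordsDerivY h b j = 0 ∧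
      ∑ j, nodeY h j * areaCoordsDerivY h b j = 1 := by
  simp only [Fin.sum_univ_three, areaCoordsDerivY, nodeX, nodeY, Matrix.cons_val_zero,
    Matrix.cons_val_one, Matrix.cons_val]
  exact ⟨by ring, by field_simp; ring, by field_simp; ring⟩

theorem areaCubic_hermiteCoeff_interpolates_at_node (ha : a ≠ 0) (hh : h ≠ 0)
    {f : ℝ → ℝ → ℝ} {w gx gy : Fin 3 → ℝ} {r : ℝ}
    (hf : ∀ x y, f x y =
      areaCubic w (hermiteCoeff w gx gy (nodeX a h b) (nodeY h)) r (areaCoords a h b x y))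
    (k : Fin 3) :
    f (nodeX a h b k) (nodeY h k) = w k ∧ pdx f (nodeX a h b k) (nodeY h k) = gx k ∧
      pdy f (nodeX a h b k) (nodeY h k) = gy k := by
  have hnode : areaCoords a h b (nodeX a h b k) (nodeY h k) = Pi.single k 1 :=
    areaCoords_node ha hh k
  obtain ⟨hX₀, hXX, hXY⟩ := areaCoordsDerivX_moments (h := h) (b := b) ha
  obtain ⟨hY₀, hYX, hYY⟩ := areaCoordsDerivY_moments (a := a) (b := b) hh
  refine ⟨?_, ?_, ?_⟩
  · rw [hf, hnode, areaCubic_single, hermiteCoeff_self, add_zero]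
  · simp only [pdx, hf]
    rw [((hasDerivAt_areaCoords_left _ _).areaCubic_hermiteCoeff_of_eq_single
      hnode hX₀ hXX hXY).deriv]
    ring
  · simp only [pdy, hf]
    rw [((hasDerivAt_areaCoords_right _ _).areaCubic_hermiteCoeff_of_eq_single
      hnode hY₀ hYX hYY).deriv]
    ring

end Element

theorem element_interpolation_exact_at_nodes_general (a h b : ℝ)
    (ha : 0 < a) (hh : 0 < h)
    (w1 w2 w3 θx1 θx2 θx3 θy1 θy2 θy3 : ℝ) :
    let w : ℝ → ℝ → ℝ := fun x y =>
      N1 a h b x y * w1 + N2 a h b x y * w2 + N3 a h b x y * w3 +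
      Nx1 a h b x y * θx1 + Nx2 a h b x y * θx2 + Nx3 a h b x y * θx3 +
      Ny1 a h b x y * θy1 + Ny2 a h b x y * θy2 + Ny3 a h b x y * θy3
    (w 0 0 = w1 ∧ w a 0 = w2 ∧ w (a * (1 - h / b)) h = w3) ∧
    (pdy w 0 0 = θx1 ∧ pdy w a 0 = θx2 ∧ pdy w (a * (1 - h / b)) h = θx3) ∧
    (pdx w 0 0 = -θy1 ∧ pdx w a 0 = -θy2 ∧ pdx w (a * (1 - h / b)) h = -θy3) := by
  intro w
  have hw : ∀ x y, w x y = areaCubic ![w1, w2, w3]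
      (hermiteCoeff ![w1, w2, w3] ![-θy1, -θy2, -θy3] ![θx1, θx2, θx3] (nodeX a h b) (nodeY h))
      ((h * (θx1 + θx2) - 2 * h * θx3 + a * (h / b - 2) * θy1 + a * (1 + h / b) * θy2
        + a * (1 - 2 * h / b) * θy3) / 2)
      (areaCoords a h b x y) := by
    intro x y
    simp only [w, N1, N2, N3, Nx1, Nx2, Nx3, Ny1, Ny2, Ny3, areaCubic, hermiteCoeff, areaCoords,
      nodeX, nodeY, Fin.sum_univ_three, Matrix.of_apply, Matrix.cons_val_zero, Matrix.cons_val_one,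
      Matrix.cons_val]
    ring
  have node := areaCubic_hermiteCoeff_interpolates_at_node ha.ne' hh.ne' hw
  obtain ⟨v₁, dx₁, dy₁⟩ := node 0
  obtain ⟨v₂, dx₂, dy₂⟩ := node 1
  obtain ⟨v₃, dx₃, dy₃⟩ := node 2
  exact ⟨⟨v₁, v₂, v₃⟩, ⟨dy₁, dy₂, dy₃⟩, ⟨dx₁, dx₂, dx₃⟩⟩

/-- The element interpolation
`w = Σ Nᵢ wᵢ + Σ Nxᵢ θxᵢ + Σ Nyᵢ θyᵢ` is exact at the nodes:
`w(Pᵢ) = wᵢ`, `∂w/∂y(Pᵢ) = θxᵢ`, `∂w/∂x(Pᵢ) = -θyᵢ`. -/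
theorem element_interpolation_exact_at_nodes (a h b : ℝ)
    (ha : 0 < a) (hh : 0 < h) (hb : h ≤ b)
    (w1 w2 w3 θx1 θx2 θx3 θy1 θy2 θy3 : ℝ) :
    let w : ℝ → ℝ → ℝ := fun x y =>
      N1 a h b x y * w1 + N2 a h b x y * w2 + N3 a h b x y * w3 +
      Nx1 a h b x y * θx1 + Nx2 a h b x y * θx2 + Nx3 a h b x y * θx3 +
      Ny1 a h b x y * θy1 + Ny2 a h b x y * θy2 + Ny3 a h b x y * θy3
    (w 0 0 = w1 ∧ w a 0 = w2 ∧ w (a * (1 - h / b)) h = w3) ∧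
    (pdy w 0 0 = θx1 ∧ pdy w a 0 = θx2 ∧ pdy w (a * (1 - h / b)) h = θx3) ∧
    (pdx w 0 0 = -θy1 ∧ pdx w a 0 = -θy2 ∧ pdx w (a * (1 - h / b)) h = -θy3) :=
  element_interpolation_exact_at_nodes_general a h b ha hh w1 w2 w3 θx1 θx2 θx3 θy1 θy2 θy3
end
end

section
/- The nine shape functions N1, N2, N3, Nx1, Nx2, Nx3, Ny1, Ny2, Ny3, regarded as elements of the real vector space of functions ℝ² → ℝ, are linearly independent over ℝ. -/
/-!
On each edge of the element the area coordinate of the opposite node vanishes, so a combination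
`∑ gᵢ Nᵢ` restricts to a cubic in Hermite form: its coefficients are the two nodal values and
multiples of the two end slopes. The cubic Hermite basis is linearly independent, so each edge
yields four linear conditions on the `gᵢ`. The edge `P1P2` kills `g0, g1, g6, g7`, the other two
edges then kill `g2, g3, g4`, and at `P3` they give `h g5 = a (1 - h/b) g8 = -(a h/b) g8`,
whence `a g8 = 0`.
-/

noncomputable section

def hermiteCubic (p q r s t : ℝ) : ℝ :=
  p * ((1 - t) ^ 2 * (1 + 2 * t)) + q * (t ^ 2 * (3 - 2 * t))
    + r * ((1 - t) ^ 2 * t) + s * ((1 - t) * t ^ 2)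

theorem hermiteCubic_coeffs_eq_zero {p q r s : ℝ} (H : ∀ t, hermiteCubic p q r s t = 0) :
    p = 0 ∧ q = 0 ∧ r = 0 ∧ s = 0 := by
  have h0 := H 0
  have h1 := H 1
  have hhalf := H (1 / 2)
  have h2 := H 2
  simp only [hermiteCubic] at h0 h1 hhalf h2
  norm_num at h0 h1 hhalf h2
  refine ⟨h0, h1, ?_, ?_⟩ <;> linarith

def shapeFunctions (a h b : ℝ) : Fin 9 → ℝ × ℝ → ℝ :=
  ![fun p : ℝ × ℝ => N1 a h b p.1 p.2,
    fun p : ℝ × ℝ => N2 a h b p.1 p.2,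
    fun p : ℝ × ℝ => N3 a h b p.1 p.2,
    fun p : ℝ × ℝ => Nx1 a h b p.1 p.2,
    fun p : ℝ × ℝ => Nx2 a h b p.1 p.2,
    fun p : ℝ × ℝ => Nx3 a h b p.1 p.2,
    fun p : ℝ × ℝ => Ny1 a h b p.1 p.2,
    fun p : ℝ × ℝ => Ny2 a h b p.1 p.2,
    fun p : ℝ × ℝ => Ny3 a h b p.1 p.2]

section Edges

variable {a h b : ℝ} (g : Fin 9 → ℝ) (t : ℝ)

theorem sum_smul_shapeFunctions_apply (x y : ℝ) :
    (∑ i, g i • shapeFunctions a h b i) (x, y) =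
      g 0 * N1 a h b x y + g 1 * N2 a h b x y + g 2 * N3 a h b x y
        + g 3 * Nx1 a h b x y + g 4 * Nx2 a h b x y + g 5 * Nx3 a h b x y
        + g 6 * Ny1 a h b x y + g 7 * Ny2 a h b x y + g 8 * Ny3 a h b x y := by
  simp [Fin.sum_univ_succ, shapeFunctions, add_assoc]

theorem sum_smul_shapeFunctions_edge₁₂ (ha : a ≠ 0) :
    (∑ i, g i • shapeFunctions a h b i) (a * t, 0) =
      hermiteCubic (g 0) (g 1) (-a * g 6) (a * g 7) t := by
  simp only [sum_smul_shapeFunctions_apply, N1, N2, N3, Nx1, Nx2, Nx3, Ny1, Ny2, Ny3, L1, L2, L3,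
    hermiteCubic]
  field_simp
  ring

theorem sum_smul_shapeFunctions_edge₁₃ (ha : a ≠ 0) (hh : h ≠ 0) :
    (∑ i, g i • shapeFunctions a h b i) (a * (1 - h / b) * t, h * t) =
      hermiteCubic (g 0) (g 2) (h * g 3 - a * (1 - h / b) * g 6)
        (a * (1 - h / b) * g 8 - h * g 5) t := by
  simp only [sum_smul_shapeFunctions_apply, N1, N2, N3, Nx1, Nx2, Nx3, Ny1, Ny2, Ny3, L1, L2, L3,
    hermiteCubic]
  field_simp
  ring

theorem sum_smul_shapeFunctions_edge₂₃ (ha : a ≠ 0) (hh : h ≠ 0) :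
    (∑ i, g i • shapeFunctions a h b i) (a * (1 - t) + a * (1 - h / b) * t, h * t) =
      hermiteCubic (g 1) (g 2) (h * g 4 + a * h / b * g 7) (-(h * g 5) - a * h / b * g 8) t := by
  simp only [sum_smul_shapeFunctions_apply, N1, N2, N3, Nx1, Nx2, Nx3, Ny1, Ny2, Ny3, L1, L2, L3,
    hermiteCubic]
  field_simp
  ring

end Edges

theorem shape_functions_linearIndependent_general (a h b : ℝ)
    (ha : 0 < a) (hh : 0 < h) :
    LinearIndependent ℝ
      (![fun p : ℝ × ℝ => N1 a h b p.1 p.2,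
         fun p : ℝ × ℝ => N2 a h b p.1 p.2,
         fun p : ℝ × ℝ => N3 a h b p.1 p.2,
         fun p : ℝ × ℝ => Nx1 a h b p.1 p.2,
         fun p : ℝ × ℝ => Nx2 a h b p.1 p.2,
         fun p : ℝ × ℝ => Nx3 a h b p.1 p.2,
         fun p : ℝ × ℝ => Ny1 a h b p.1 p.2,
         fun p : ℝ × ℝ => Ny2 a h b p.1 p.2,
         fun p : ℝ × ℝ => Ny3 a h b p.1 p.2] :
        Fin 9 → (ℝ × ℝ → ℝ)) := by
  change LinearIndependent ℝ (shapeFunctions a h b)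
  rw [Fintype.linearIndependent_iff]
  intro g hg
  obtain ⟨h0, h1, h6, h7⟩ := hermiteCubic_coeffs_eq_zero fun t => by
    rw [← sum_smul_shapeFunctions_edge₁₂ g t ha.ne', hg, Pi.zero_apply]
  obtain ⟨-, h2, h36, h58⟩ := hermiteCubic_coeffs_eq_zero fun t => by
    rw [← sum_smul_shapeFunctions_edge₁₃ (b := b) g t ha.ne' hh.ne', hg, Pi.zero_apply]
  obtain ⟨-, -, h47, h58'⟩ := hermiteCubic_coeffs_eq_zero fun t => by
    rw [← sum_smul_shapeFunctions_edge₂₃ (b := b) g t ha.ne' hh.ne', hg, Pi.zero_apply]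
  have h6 : g 6 = 0 := by simpa [ha.ne'] using h6
  have h7 : g 7 = 0 := by simpa [ha.ne'] using h7
  have h3 : g 3 = 0 := by simpa [h6, hh.ne'] using h36
  have h4 : g 4 = 0 := by simpa [h7, hh.ne'] using h47
  -- `a (1 - h/b) + a h/b = a`
  have h8 : g 8 = 0 := by
    have : a * g 8 = 0 := by linear_combination h58 - h58'
    simpa [ha.ne'] using this
  have h5 : g 5 = 0 := by simpa [h8, hh.ne'] using h58
  intro i
  fin_cases i <;> assumption

/-- The nine shape functions are linearly independent in the real vector space
of functions `ℝ² → ℝ`. -/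
theorem shape_functions_linearIndependent (a h b : ℝ)
    (ha : 0 < a) (hh : 0 < h) (hb : h ≤ b) :
    LinearIndependent ℝ
      (![fun p : ℝ × ℝ => N1 a h b p.1 p.2,
         fun p : ℝ × ℝ => N2 a h b p.1 p.2,
         fun p : ℝ × ℝ => N3 a h b p.1 p.2,
         fun p : ℝ × ℝ => Nx1 a h b p.1 p.2,
         fun p : ℝ × ℝ => Nx2 a h b p.1 p.2,
         fun p : ℝ × ℝ => Nx3 a h b p.1 p.2,
         fun p : ℝ × ℝ => Ny1 a h b p.1 p.2,
         fun p : ℝ × ℝ => Ny2 a h b p.1 p.2,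
         fun p : ℝ × ℝ => Ny3 a h b p.1 p.2] :
        Fin 9 → (ℝ × ℝ → ℝ)) :=
  shape_functions_linearIndependent_general a h b ha hh
end
end

section
/- The basic full node shape function φ is well defined (the six piecewise polynomial expressions agree wherever two of the domains D1,…,D6 intersect, and each vanishes on the outer boundary of the hexagon D1 ∪ … ∪ D6) and φ : ℝ² → ℝ is continuous. -/
/-!
Since `g1 = g2 + g3`, one of `|g1|, |g2|, |g3|` is the sum of the other two, so the hexagonal
norm `N = max |gi|` equals `(|g1| + |g2| + |g3|) / 2`. The hexagon `D1 ∪ … ∪ D6` is its closed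
unit ball, and on each `Di` the signs of `g1, g2, g3` are fixed. There the first argument of `F`
is `1 - N` and the other two sum to `N`, which turns every piece into the single expression
`(1 - N) (1 + N - (g1² + g2² + g3²))`. So the pieces agree on overlaps, vanish on the boundary
`N = 1`, and `φ = max 0 (1 - N) · (1 + N - (g1² + g2² + g3²))` is continuous.
-/

noncomputable section

/-- Linear functional `g1(x,y) = x/a + y/b`. -/
def g1 (a b : ℝ) (p : ℝ × ℝ) : ℝ := p.1 / a + p.2 / b

/-- Linear functional `g2(x,y) = x/a - (1/h - 1/b)·y`. -/
def g2 (a h b : ℝ) (p : ℝ × ℝ) : ℝ := p.1 / a - (1 / h - 1 / b) * p.2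

/-- Linear functional `g3(x,y) = y/h`. -/
def g3 (h : ℝ) (p : ℝ × ℝ) : ℝ := p.2 / h

/-- The cubic polynomial `F(u,v,w) = u + u²·(v + w) - u·(v² + w²)`. -/
def Fcube (u v w : ℝ) : ℝ := u + u ^ 2 * (v + w) - u * (v ^ 2 + w ^ 2)

/-- The six subdomains `D1, …, D6` of the hexagon around the origin. -/
def Dom (a h b : ℝ) : Fin 6 → Set (ℝ × ℝ)
  | 0 => {p | 0 ≤ g2 a h b p ∧ 0 ≤ g3 h p ∧ g1 a b p ≤ 1}
  | 1 => {p | 0 ≤ g1 a b p ∧ g2 a h b p ≤ 0 ∧ g3 h p ≤ 1}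
  | 2 => {p | g1 a b p ≤ 0 ∧ 0 ≤ g3 h p ∧ -1 ≤ g2 a h b p}
  | 3 => {p | g2 a h b p ≤ 0 ∧ g3 h p ≤ 0 ∧ -1 ≤ g1 a b p}
  | 4 => {p | g1 a b p ≤ 0 ∧ 0 ≤ g2 a h b p ∧ -1 ≤ g3 h p}
  | 5 => {p | 0 ≤ g1 a b p ∧ g3 h p ≤ 0 ∧ g2 a h b p ≤ 1}

/-- The six polynomial pieces of the basic full node shape function. -/
def Fpiece (a h b : ℝ) : Fin 6 → ℝ × ℝ → ℝ
  | 0 => fun p => Fcube (1 - g1 a b p) (g2 a h b p) (g3 h p)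
  | 1 => fun p => Fcube (1 - g3 h p) (g1 a b p) (-g2 a h b p)
  | 2 => fun p => Fcube (1 + g2 a h b p) (-g1 a b p) (g3 h p)
  | 3 => fun p => Fcube (1 + g1 a b p) (-g2 a h b p) (-g3 h p)
  | 4 => fun p => Fcube (1 + g3 h p) (-g1 a b p) (g2 a h b p)
  | 5 => fun p => Fcube (1 - g2 a h b p) (g1 a b p) (-g3 h p)

open Classical in
/-- The basic full node shape function `φ`, defined piecewise on the hexagon
`D1 ∪ … ∪ D6` and zero outside. -/
def phi (a h b : ℝ) (p : ℝ × ℝ) : ℝ :=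
  if p ∈ Dom a h b 0 then Fpiece a h b 0 p
  else if p ∈ Dom a h b 1 then Fpiece a h b 1 p
  else if p ∈ Dom a h b 2 then Fpiece a h b 2 p
  else if p ∈ Dom a h b 3 then Fpiece a h b 3 p
  else if p ∈ Dom a h b 4 then Fpiece a h b 4 p
  else if p ∈ Dom a h b 5 then Fpiece a h b 5 p
  else 0

theorem g1_eq_g2_add_g3 (a h b : ℝ) (p : ℝ × ℝ) : g1 a b p = g2 a h b p + g3 h p := by
  simp only [g1, g2, g3]
  ring

def hexNorm (a h b : ℝ) (p : ℝ × ℝ) : ℝ := (|g1 a b p| + |g2 a h b p| + |g3 h p|) / 2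

def gSqSum (a h b : ℝ) (p : ℝ × ℝ) : ℝ := g1 a b p ^ 2 + g2 a h b p ^ 2 + g3 h p ^ 2

section

variable {a h b : ℝ}

@[fun_prop]
theorem continuous_hexNorm : Continuous (hexNorm a h b) := by
  unfold hexNorm g1 g2 g3
  fun_prop

@[fun_prop]
theorem continuous_gSqSum : Continuous (gSqSum a h b) := by
  unfold gSqSum g1 g2 g3
  fun_prop

theorem Fpiece_eq_of_mem_Dom {i : Fin 6} {p : ℝ × ℝ} (hp : p ∈ Dom a h b i) :
    Fpiece a h b i p = (1 - hexNorm a h b p) * (1 + hexNorm a h b p - gSqSum a h b p) := by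
  have hg := g1_eq_g2_add_g3 a h b p
  fin_cases i <;> obtain ⟨c1, c2, c3⟩ := hp <;>
    simp (disch := grind) only [Fpiece, Fcube, hexNorm, gSqSum, abs_of_nonneg,
      abs_of_nonpos] <;>
    rw [hg] <;> ring

theorem hexNorm_le_one_of_mem_Dom {i : Fin 6} {p : ℝ × ℝ} (hp : p ∈ Dom a h b i) :
    hexNorm a h b p ≤ 1 := by
  have hg := g1_eq_g2_add_g3 a h b p
  fin_cases i <;> obtain ⟨c1, c2, c3⟩ := hp <;>
    simp (disch := grind) only [hexNorm, abs_of_nonneg, abs_of_nonpos] <;> linarith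

theorem exists_mem_Dom_of_hexNorm_le_one {p : ℝ × ℝ} (hN : hexNorm a h b p ≤ 1) :
    ∃ i, p ∈ Dom a h b i := by
  have hg := g1_eq_g2_add_g3 a h b p
  unfold hexNorm at hN
  rcases le_total 0 (g2 a h b p) with h2 | h2 <;> rcases le_total 0 (g3 h p) with h3 | h3 <;>
    rcases le_total 0 (g1 a b p) with h1 | h1 <;>
    simp (disch := grind) only [abs_of_nonneg, abs_of_nonpos] at hN
  all_goals first
    | exact ⟨0, h2, h3, by linarith⟩ | exact ⟨1, h1, h2, by linarith⟩
    | exact ⟨2, h1, h3, by linarith⟩ | exact ⟨3, h2, h3, by linarith⟩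
    | exact ⟨4, h1, h2, by linarith⟩ | exact ⟨5, h1, h3, by linarith⟩

theorem iUnion_Dom_eq : ⋃ i, Dom a h b i = {p | hexNorm a h b p ≤ 1} := by
  ext p
  simp only [Set.mem_iUnion, Set.mem_ofPred_eq]
  exact ⟨fun ⟨_, hp⟩ => hexNorm_le_one_of_mem_Dom hp, exists_mem_Dom_of_hexNorm_le_one⟩

theorem phi_eq_max (p : ℝ × ℝ) :
    phi a h b p = max 0 (1 - hexNorm a h b p) * (1 + hexNorm a h b p - gSqSum a h b p) := by
  have outside (hp : ∀ i, p ∉ Dom a h b i) : hexNorm a h b p > 1 := by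
    by_contra hN
    obtain ⟨i, hi⟩ := exists_mem_Dom_of_hexNorm_le_one (not_lt.mp hN)
    exact hp i hi
  have inside {i : Fin 6} (hp : p ∈ Dom a h b i) : Fpiece a h b i p =
      max 0 (1 - hexNorm a h b p) * (1 + hexNorm a h b p - gSqSum a h b p) := by
    rw [Fpiece_eq_of_mem_Dom hp, max_eq_right (by linarith [hexNorm_le_one_of_mem_Dom hp])]
  unfold phi
  split_ifs with h0 h1 h2 h3 h4 h5
  any_goals exact inside ‹_›
  rw [max_eq_left (by linarith [outside (by intro i; fin_cases i <;> assumption)]), zero_mul]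

end

theorem phi_wellDefined_and_continuous_general (a h b : ℝ) :
    (∀ i j : Fin 6, ∀ p ∈ Dom a h b i ∩ Dom a h b j,
        Fpiece a h b i p = Fpiece a h b j p) ∧
    (∀ i : Fin 6, ∀ p ∈ Dom a h b i ∩ frontier (⋃ j, Dom a h b j),
        Fpiece a h b i p = 0) ∧
    Continuous (phi a h b) := by
  refine ⟨fun i j p ⟨hi, hj⟩ => ?_, fun i p ⟨hi, hfr⟩ => ?_, ?_⟩
  · rw [Fpiece_eq_of_mem_Dom hi, Fpiece_eq_of_mem_Dom hj]
  · rw [iUnion_Dom_eq] at hfr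
    have hN : hexNorm a h b p = 1 := frontier_le_subset_eq continuous_hexNorm continuous_const hfr
    rw [Fpiece_eq_of_mem_Dom hi, hN, sub_self, zero_mul]
  · rw [funext phi_eq_max]
    fun_prop

/-- The basic full node shape function `φ` is well defined (the six pieces agree
on overlaps and vanish on the outer boundary of the hexagon) and continuous. -/
theorem phi_wellDefined_and_continuous (a h b : ℝ)
    (ha : 0 < a) (hh : 0 < h) (hb : h ≤ b) :
    (∀ i j : Fin 6, ∀ p ∈ Dom a h b i ∩ Dom a h b j,
        Fpiece a h b i p = Fpiece a h b j p) ∧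
    (∀ i : Fin 6, ∀ p ∈ Dom a h b i ∩ frontier (⋃ j, Dom a h b j),
        Fpiece a h b i p = 0) ∧
    Continuous (phi a h b) :=
  phi_wellDefined_and_continuous_general a h b
end
end

section
/- The basic full node shape function φ satisfies the Kronecker delta property on the node lattice: for all integers p and q, φ(a·(p - q·h/b), q·h) = 1 if p = q = 0, and φ(a·(p - q·h/b), q·h) = 0 otherwise. -/
noncomputable section

/-!
At the node `(a (p - q h / b), q h)` the functionals take the integer values `g1 = p`,
`g2 = p - q`, `g3 = q`. Every subdomain is cut out by three inequalities between these values, and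
at a node other than the origin they force the first argument `u` of the corresponding piece
`F(u, v, w)` to be `0`, where `F` vanishes. The origin lies in `D1`, where `φ = F(1, 0, 0) = 1`.
-/

section Lattice

variable {a h b : ℝ}

theorem g1_node (ha : a ≠ 0) (m n : ℝ) : g1 a b (a * (m - n * h / b), n * h) = m := by
  simp only [g1]
  field_simp
  ring

theorem g2_node (ha : a ≠ 0) (hh : h ≠ 0) (m n : ℝ) :
    g2 a h b (a * (m - n * h / b), n * h) = m - n := by
  simp only [g2]
  field_simp
  ring

theorem g3_node (hh : h ≠ 0) (x n : ℝ) : g3 h (x, n * h) = n := by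
  simp only [g3]
  field_simp

end Lattice

theorem Fcube_zero_left (v w : ℝ) : Fcube 0 v w = 0 := by
  simp [Fcube]

theorem phi_zero_zero (a h b : ℝ) : phi a h b (0, 0) = 1 := by
  have hmem : ((0, 0) : ℝ × ℝ) ∈ Dom a h b 0 := by simp [Dom, g1, g2, g3]
  simp [phi, hmem, Fpiece, Fcube, g1, g2, g3]

theorem phi_eq_zero_of_forall_mem_Dom {a h b : ℝ} {x : ℝ × ℝ}
    (H : ∀ i, x ∈ Dom a h b i → Fpiece a h b i x = 0) : phi a h b x = 0 := by
  unfold phi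
  split_ifs with h0 h1 h2 h3 h4 h5
  exacts [H 0 h0, H 1 h1, H 2 h2, H 3 h3, H 4 h4, H 5 h5, rfl]

theorem Fpiece_eq_zero_of_int {a h b : ℝ} {x : ℝ × ℝ} {m n : ℤ} (hmn : ¬(m = 0 ∧ n = 0))
    (h1 : g1 a b x = m) (h2 : g2 a h b x = m - n) (h3 : g3 h x = n) (i : Fin 6)
    (hx : x ∈ Dom a h b i) : Fpiece a h b i x = 0 := by
  fin_cases i <;>
    simp only [Dom, Fpiece, Set.mem_ofPred_eq, h1, h2, h3] at hx ⊢ <;>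
    convert Fcube_zero_left _ _ using 2 <;>
    norm_cast at hx ⊢ <;>
    omega

theorem phi_kronecker_delta_on_lattice_general (a h b : ℝ)
    (ha : 0 < a) (hh : 0 < h) :
    ∀ p q : ℤ,
      phi a h b (a * ((p : ℝ) - (q : ℝ) * h / b), (q : ℝ) * h)
        = if p = 0 ∧ q = 0 then 1 else 0 := by
  intro p q
  by_cases hpq : p = 0 ∧ q = 0
  · obtain ⟨rfl, rfl⟩ := hpq
    simpa using phi_zero_zero a h b
  · rw [if_neg hpq]
    exact phi_eq_zero_of_forall_mem_Dom <| Fpiece_eq_zero_of_int hpq (g1_node ha.ne' _ _)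
      (g2_node ha.ne' hh.ne' _ _) (g3_node hh.ne' _ _)

/-- Kronecker delta property of `φ` on the node lattice. -/
theorem phi_kronecker_delta_on_lattice (a h b : ℝ)
    (ha : 0 < a) (hh : 0 < h) (hb : h ≤ b) :
    ∀ p q : ℤ,
      phi a h b (a * ((p : ℝ) - (q : ℝ) * h / b), (q : ℝ) * h)
        = if p = 0 ∧ q = 0 then 1 else 0 :=
  phi_kronecker_delta_on_lattice_general a h b ha hh
end
end
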